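/- Assume A_0 > 0 and κ_0 ∈ (0,1). Then for every fixed λ ≠ 0, lim_{h→0⁺} h^{1−κ_0} f(hλ) = (A_0/(2 Γ(κ_0) cos(πκ_0/2))) |λ|^{κ_0−1}; that is, the singularity of the spectral density at the origin dominates and determines the small-frequency scaling limit. -/

import Mathlib

open Real Filter Topology MeasureTheory

/-- The modified Bessel function of the second kind
`K_ν(z) = (1/2) ∫_0^∞ s^{ν−1} exp(−(z/2)(s + 1/s)) ds`. -/
noncomputable def besselK (ν z : ℝ) : ℝ :=
  (1 / 2) * ∫ s in Set.Ioi (0 : ℝ), s ^ (ν - 1) * Real.exp (-(z / 2) * (s + 1 / s))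

open Set

lemma exp_neg_le_four_div_sq {t : ℝ} (ht : 0 < t) : Real.exp (-t) ≤ 4 / t ^ 2 := by
  have h2 : Real.exp (t/2) * Real.exp (t/2) = Real.exp t := by
    rw [← Real.exp_add]; ring_nf
  have h1 := Real.add_one_le_exp (t/2)
  rw [Real.exp_neg, le_div_iff₀ (by positivity)]
  have hinv : Real.exp t * (Real.exp t)⁻¹ = 1 := mul_inv_cancel₀ (Real.exp_pos t).ne'
  nlinarith [Real.exp_pos t, Real.exp_pos (t/2), sq_nonneg (Real.exp t - t^2/4)]

lemma besselK_meas (ν z : ℝ) :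
    Measurable (fun s : ℝ => s ^ (ν - 1) * Real.exp (-(z / 2) * (s + 1 / s))) := by
  fun_prop

lemma besselK_integrableOn {ν c : ℝ} (hν1 : -1 < ν) (hν2 : ν ≤ 1) (hc : 0 < c) :
    IntegrableOn (fun s : ℝ => s ^ (ν - 1) * Real.exp (-(c / 2) * (s + 1 / s))) (Set.Ioi 0) := by
  rw [← Set.Ioc_union_Ioi_eq_Ioi (zero_le_one)]
  refine IntegrableOn.union ?_ ?_
  · refine Integrable.mono' (g := fun _ => 16 / c ^ 2)
      ((integrableOn_const_iff).mpr (Or.inr measure_Ioc_lt_top))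
      (besselK_meas ν c).aestronglyMeasurable.restrict ?_
    rw [ae_restrict_iff' measurableSet_Ioc]
    refine ae_of_all _ fun s hs => ?_
    obtain ⟨hs0, hs1⟩ := hs
    have hexp1 : Real.exp (-(c / 2) * (s + 1 / s)) ≤ Real.exp (-(c / (2 * s))) := by
      apply Real.exp_le_exp.mpr
      rw [neg_mul, neg_le_neg_iff, div_le_iff₀ (by positivity)]
      have : 1 / s * s = 1 := by field_simp
      nlinarith [sq_nonneg s, mul_pos hs0 hs0]
    have hexp2 : Real.exp (-(c / (2 * s))) ≤ 4 / (c / (2 * s)) ^ 2 :=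
      exp_neg_le_four_div_sq (by positivity)
    have h3 : (4:ℝ) / (c / (2 * s)) ^ 2 = 16 / c ^ 2 * s ^ (2:ℝ) := by
      rw [Real.rpow_two]; field_simp; ring
    rw [Real.norm_eq_abs, abs_of_nonneg (by positivity)]
    calc s ^ (ν - 1) * Real.exp (-(c / 2) * (s + 1 / s))
        ≤ s ^ (ν - 1) * (16 / c ^ 2 * s ^ (2:ℝ)) := by
          rw [← h3]; exact mul_le_mul_of_nonneg_left (hexp1.trans hexp2) (by positivity)
      _ = 16 / c ^ 2 * (s ^ (ν - 1) * s ^ (2:ℝ)) := by ring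
      _ = 16 / c ^ 2 * s ^ (ν + 1) := by
          rw [← Real.rpow_add hs0, show ν - 1 + 2 = ν + 1 by ring]
      _ ≤ 16 / c ^ 2 * 1 := by
          refine mul_le_mul_of_nonneg_left (Real.rpow_le_one hs0.le hs1 (by linarith)) (by positivity)
      _ = 16 / c ^ 2 := mul_one _
  · refine Integrable.mono' (exp_neg_integrableOn_Ioi 1 (half_pos hc))
      (besselK_meas ν c).aestronglyMeasurable.restrict ?_
    rw [ae_restrict_iff' measurableSet_Ioi]
    refine ae_of_all _ fun s hs => ?_
    have hs1 : (1:ℝ) < s := hs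
    have hs0 : (0:ℝ) < s := zero_lt_one.trans hs1
    rw [Real.norm_eq_abs, abs_of_nonneg (by positivity)]
    calc s ^ (ν - 1) * Real.exp (-(c / 2) * (s + 1 / s))
        ≤ 1 * Real.exp (-(c / 2) * s) := by
          refine mul_le_mul (Real.rpow_le_one_of_one_le_of_nonpos hs1.le (by linarith)) ?_
            (Real.exp_pos _).le zero_le_one
          apply Real.exp_le_exp.mpr
          have h1s : 0 < 1 / s := by positivity
          nlinarith [half_pos hc]
      _ = Real.exp (-(c / 2) * s) := one_mul _

lemma besselK_nonneg (ν z : ℝ) : 0 ≤ besselK ν z := by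
  unfold besselK
  refine mul_nonneg (by norm_num) (setIntegral_nonneg measurableSet_Ioi fun s hs => ?_)
  exact mul_nonneg (Real.rpow_nonneg (le_of_lt hs) _) (Real.exp_pos _).le

lemma besselK_anti {ν c z : ℝ} (hν1 : -1 < ν) (hν2 : ν ≤ 1) (hc : 0 < c) (hcz : c ≤ z) :
    besselK ν z ≤ besselK ν c := by
  unfold besselK
  refine mul_le_mul_of_nonneg_left ?_ (by norm_num)
  refine integral_mono_of_nonneg ?_ (besselK_integrableOn hν1 hν2 hc) ?_
  · rw [Filter.EventuallyLE, ae_restrict_iff' measurableSet_Ioi]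
    refine ae_of_all _ fun s hs => ?_
    have hs0 : (0:ℝ) < s := hs
    exact mul_nonneg (Real.rpow_nonneg hs0.le _) (Real.exp_pos _).le
  · rw [Filter.EventuallyLE, ae_restrict_iff' measurableSet_Ioi]
    refine ae_of_all _ fun s hs => ?_
    have hs0 : (0:ℝ) < s := hs
    refine mul_le_mul_of_nonneg_left ?_ (Real.rpow_nonneg hs0.le _)
    apply Real.exp_le_exp.mpr
    have h1s : 0 < s + 1 / s := by positivity
    nlinarith

lemma besselK_eq_of_pos {ν z : ℝ} (hz : 0 < z) :
    besselK ν z = 1 / 2 * (2 / z) ^ (-ν) *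
      ∫ x in Set.Ioi (0:ℝ), x ^ (-ν - 1) * Real.exp (-(x + z ^ 2 / (4 * x))) := by
  unfold besselK
  have hz' : z ≠ 0 := hz.ne'
  have h1 : (∫ s in Ioi (0:ℝ), s ^ (ν - 1) * Real.exp (-(z / 2) * (s + 1 / s)))
      = ∫ s in Ioi (0:ℝ), s ^ (-ν - 1) * Real.exp (-(z / 2) * (s + 1 / s)) := by
    rw [← integral_comp_rpow_Ioi (fun s => s ^ (ν - 1) * Real.exp (-(z / 2) * (s + 1 / s)))
      (p := -1) (by norm_num)]
    refine setIntegral_congr_fun measurableSet_Ioi fun x hx => ?_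
    have hx0 : (0:ℝ) < x := hx
    have hx' : x ≠ 0 := hx0.ne'
    rw [Real.rpow_neg_one, smul_eq_mul]
    rw [Real.inv_rpow hx0.le, ← Real.rpow_neg hx0.le]
    have : |(-1:ℝ)| * x ^ ((-1:ℝ) - 1) = x ^ (-2:ℝ) := by
      rw [abs_neg, abs_one, one_mul]; norm_num
    rw [this]
    have harg : x⁻¹ + 1 / x⁻¹ = x + 1 / x := by field_simp; ring
    rw [harg]
    rw [show x ^ (-2:ℝ) * (x ^ (-(ν - 1)) * Real.exp (-(z / 2) * (x + 1 / x)))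
        = x ^ (-2:ℝ) * x ^ (-(ν - 1)) * Real.exp (-(z / 2) * (x + 1 / x)) from by ring,
      ← Real.rpow_add hx0, show (-2:ℝ) + -(ν - 1) = -ν - 1 by ring]
  rw [h1]
  have hb : (0:ℝ) < 2 / z := by positivity
  have h2 := integral_comp_mul_left_Ioi
    (fun s => s ^ (-ν - 1) * Real.exp (-(z / 2) * (s + 1 / s))) 0 hb
  rw [mul_zero] at h2
  have h3 : (∫ x in Ioi (0:ℝ), (fun s => s ^ (-ν - 1) * Real.exp (-(z / 2) * (s + 1 / s))) (2 / z * x))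
      = (2 / z) ^ (-ν - 1) * ∫ x in Ioi (0:ℝ), x ^ (-ν - 1) * Real.exp (-(x + z ^ 2 / (4 * x))) := by
    rw [← integral_const_mul]
    refine setIntegral_congr_fun measurableSet_Ioi fun x hx => ?_
    have hx0 : (0:ℝ) < x := hx
    simp only
    rw [Real.mul_rpow hb.le hx0.le]
    have harg : -(z / 2) * (2 / z * x + 1 / (2 / z * x)) = -(x + z ^ 2 / (4 * x)) := by
      field_simp; ring
    rw [harg]; ring
  rw [h3] at h2
  have h5 : (∫ s in Ioi (0:ℝ), s ^ (-ν - 1) * Real.exp (-(z / 2) * (s + 1 / s)))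
      = (2 / z) * ((2 / z) ^ (-ν - 1) *
        ∫ x in Ioi (0:ℝ), x ^ (-ν - 1) * Real.exp (-(x + z ^ 2 / (4 * x)))) := by
    rw [h2, smul_eq_mul, ← mul_assoc, mul_inv_cancel₀ hb.ne', one_mul]
  have h6 : (2 / z) * (2 / z) ^ (-ν - 1) = (2 / z) ^ (-ν) := by
    have h7 := Real.rpow_add hb 1 (-ν - 1)
    rw [Real.rpow_one] at h7
    rw [← h7]; congr 1; ring
  rw [h5, ← h6]; ring

lemma tendsto_J {μ : ℝ} (hμ : 0 < μ) :
    Tendsto (fun z : ℝ => ∫ x in Ioi (0:ℝ), x ^ (μ - 1) * Real.exp (-(x + z ^ 2 / (4 * x))))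
      (𝓝[>] (0:ℝ)) (𝓝 (Real.Gamma μ)) := by
  have hΓ : Real.Gamma μ = ∫ x in Ioi (0:ℝ), x ^ (μ - 1) * Real.exp (-x) := by
    rw [Real.Gamma_eq_integral hμ]
    exact setIntegral_congr_fun measurableSet_Ioi fun x _ => mul_comm _ _
  rw [hΓ]
  refine tendsto_integral_filter_of_dominated_convergence
    (fun x => x ^ (μ - 1) * Real.exp (-x)) ?_ ?_ ?_ ?_
  · refine Eventually.of_forall fun z => ?_
    have : Measurable fun x : ℝ => x ^ (μ - 1) * Real.exp (-(x + z ^ 2 / (4 * x))) := by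
      fun_prop
    exact this.aestronglyMeasurable.restrict
  · refine Eventually.of_forall fun z => ?_
    rw [ae_restrict_iff' measurableSet_Ioi]
    refine ae_of_all _ fun x hx => ?_
    have hx0 : (0:ℝ) < x := hx
    rw [Real.norm_eq_abs, abs_of_nonneg (by positivity)]
    refine mul_le_mul_of_nonneg_left ?_ (Real.rpow_nonneg hx0.le _)
    apply Real.exp_le_exp.mpr
    have : 0 ≤ z ^ 2 / (4 * x) := by positivity
    linarith
  · refine ((Real.GammaIntegral_convergent hμ).congr_fun (fun x hx => mul_comm _ _)
      measurableSet_Ioi)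
  · rw [ae_restrict_iff' measurableSet_Ioi]
    refine ae_of_all _ fun x hx => ?_
    have hx0 : (0:ℝ) < x := hx
    have hc : Continuous fun z : ℝ => x ^ (μ - 1) * Real.exp (-(x + z ^ 2 / (4 * x))) := by
      fun_prop
    have := (hc.tendsto 0).mono_left (nhdsWithin_le_nhds (s := Ioi (0:ℝ)))
    simpa using this

lemma tendsto_rpow_mul_besselK {k : ℝ} (hk1 : 0 < k) (hk2 : k < 1) :
    Tendsto (fun z : ℝ => z ^ ((1 - k) / 2) * besselK ((k - 1) / 2) z) (𝓝[>] (0:ℝ))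
      (𝓝 (2 ^ ((1 - k) / 2 - 1) * Real.Gamma ((1 - k) / 2))) := by
  set μ := (1 - k) / 2 with hμdef
  have hμ : 0 < μ := by rw [hμdef]; linarith
  have key := (tendsto_J hμ).const_mul ((2:ℝ) ^ (μ - 1))
  refine Tendsto.congr' ?_ key
  filter_upwards [self_mem_nhdsWithin] with z hz
  have hz0 : (0:ℝ) < z := hz
  have hrep := besselK_eq_of_pos (ν := (k - 1) / 2) hz0
  rw [show -((k - 1) / 2) = μ by rw [hμdef]; ring] at hrep
  rw [hrep]
  have hd : (2 / z) ^ μ = 2 ^ μ / z ^ μ := Real.div_rpow (by norm_num) hz0.le μ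
  have hzμ : (0:ℝ) < z ^ μ := Real.rpow_pos_of_pos hz0 μ
  have h2 : (2:ℝ) ^ (μ - 1) = 2 ^ μ / 2 := by
    rw [Real.rpow_sub two_pos, Real.rpow_one]
  rw [hd, h2]
  generalize (∫ x in Ioi (0:ℝ), x ^ (μ - 1) * Real.exp (-(x + z ^ 2 / (4 * x)))) = I
  field_simp

lemma gamma_const_eq {k : ℝ} (h1 : 0 < k) (h2 : k < 1) :
    2 * 2 ^ ((1 - k) / 2) / (Real.sqrt π * Real.Gamma (k / 2)) / 2 *
      (2 ^ ((1 - k) / 2 - 1) * Real.Gamma ((1 - k) / 2))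
      = 1 / (2 * Real.Gamma k * Real.cos (π * k / 2)) := by
  have hs : 0 < Real.sqrt π := Real.sqrt_pos.mpr Real.pi_pos
  have hG1 : 0 < Real.Gamma (k / 2) := Real.Gamma_pos_of_pos (by linarith)
  have hG2 : 0 < Real.Gamma k := Real.Gamma_pos_of_pos h1
  have hG3 : 0 < Real.Gamma ((1 - k) / 2) := Real.Gamma_pos_of_pos (by linarith)
  have hG4 : 0 < Real.Gamma ((k + 1) / 2) := Real.Gamma_pos_of_pos (by linarith)
  have hcos : 0 < Real.cos (π * k / 2) := by
    apply Real.cos_pos_of_mem_Ioo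
    constructor
    · nlinarith [Real.pi_pos]
    · nlinarith [Real.pi_pos]
  have hdup := Real.Gamma_mul_Gamma_add_half (k / 2)
  rw [show 2 * (k / 2) = k by ring, show k / 2 + 1 / 2 = (k + 1) / 2 by ring] at hdup
  have hrefl := Real.Gamma_mul_Gamma_one_sub ((k + 1) / 2)
  have hsin : Real.sin (π * ((k + 1) / 2)) = Real.cos (π * k / 2) := by
    rw [show π * ((k + 1) / 2) = π / 2 + π * k / 2 by ring, Real.sin_add]
    simp
  rw [hsin, show (1 : ℝ) - (k + 1) / 2 = (1 - k) / 2 by ring,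
    eq_div_iff hcos.ne'] at hrefl
  have hππ : Real.sqrt π * Real.sqrt π = π := Real.mul_self_sqrt Real.pi_pos.le
  have key : 2 ^ (1 - k) * Real.Gamma ((1 - k) / 2) * Real.Gamma k * Real.cos (π * k / 2)
      = Real.sqrt π * Real.Gamma (k / 2) := by
    apply mul_left_cancel₀ hG4.ne'
    linear_combination (2:ℝ) ^ (1 - k) * Real.Gamma k * hrefl - Real.sqrt π * hdup -
      (2:ℝ) ^ (1 - k) * Real.Gamma k * hππ
  have h2k : (2:ℝ) ^ ((1 - k) / 2) * 2 ^ ((1 - k) / 2 - 1) = 2 ^ (1 - k) / 2 := by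
    rw [← Real.rpow_add two_pos]
    rw [show (1 - k) / 2 + ((1 - k) / 2 - 1) = (1 - k) - 1 by ring,
      Real.rpow_sub two_pos, Real.rpow_one]
  have hpow : (0:ℝ) < 2 ^ (1 - k) := Real.rpow_pos_of_pos two_pos _
  have hpow2 : (0:ℝ) < 2 ^ ((1 - k) / 2) := Real.rpow_pos_of_pos two_pos _
  have h2k' : (2:ℝ) ^ ((1 - k) / 2) * 2 ^ ((1 - k - 2) / 2) = 2 ^ (1 - k) / 2 := by
    rw [← Real.rpow_add two_pos]
    rw [show (1 - k) / 2 + (1 - k - 2) / 2 = (1 - k) - 1 by ring,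
      Real.rpow_sub two_pos, Real.rpow_one]
  have hcos' : Real.cos (k * π / 2) ≠ 0 := by rw [show k * π / 2 = π * k / 2 by ring]; exact hcos.ne'
  field_simp
  rw [show k * π / 2 = π * k / 2 by ring]
  linear_combination 2 * Real.Gamma ((1 - k) / 2) * Real.Gamma k * Real.cos (π * k / 2) * h2k'
    + key

/-- The spectral density
`f(λ) = (c_1(κ_0)/2) A_0 K_{(κ_0−1)/2}(|λ|)|λ|^{(κ_0−1)/2}
  + ∑_{j=1}^n (c_1(κ_j)/2) A_j (K_{(κ_j−1)/2}(|λ+w_j|)|λ+w_j|^{(κ_j−1)/2}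
                              + K_{(κ_j−1)/2}(|λ−w_j|)|λ−w_j|^{(κ_j−1)/2})`,
with `c_1(κ_0) = 2·2^{(1−κ_0)/2}/(√π Γ(κ_0/2))` and
`c_1(κ_j) = 2^{(1−κ_j)/2}/(√π Γ(κ_j/2))` for `j ≥ 1`. -/
noncomputable def specDensity (n : ℕ) (w κ A : ℕ → ℝ) (lam : ℝ) : ℝ :=
  2 * (2 : ℝ) ^ ((1 - κ 0) / 2) / (Real.sqrt Real.pi * Real.Gamma (κ 0 / 2)) / 2 * A 0 *
      besselK ((κ 0 - 1) / 2) |lam| * |lam| ^ ((κ 0 - 1) / 2) +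
    ∑ j ∈ Finset.Icc 1 n,
      (2 : ℝ) ^ ((1 - κ j) / 2) / (Real.sqrt Real.pi * Real.Gamma (κ j / 2)) / 2 * A j *
        (besselK ((κ j - 1) / 2) |lam + w j| * |lam + w j| ^ ((κ j - 1) / 2) +
          besselK ((κ j - 1) / 2) |lam - w j| * |lam - w j| ^ ((κ j - 1) / 2))

/-- With `A₀ > 0`, for every fixed `λ ≠ 0`,
`h^{1−κ₀} f(hλ) → (A₀/(2Γ(κ₀)cos(πκ₀/2))) |λ|^{κ₀−1}` as `h → 0⁺`:
the singularity at the origin dominates the small-frequency scaling limit. -/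
theorem origin_singularity_dominates (n : ℕ) (hn : 1 ≤ n) (w κ A : ℕ → ℝ)
    (hw0 : w 0 = 0) (hw : ∀ j ∈ Finset.Icc 1 n, 0 < w j)
    (hκ : ∀ j ∈ Finset.range (n + 1), κ j ∈ Set.Ioo (0 : ℝ) 1)
    (hA : ∀ j ∈ Finset.range (n + 1), 0 ≤ A j)
    (hAsum : ∑ j ∈ Finset.range (n + 1), A j = 1) (hA0 : 0 < A 0)
    (lam : ℝ) (hlam : lam ≠ 0) :
    Filter.Tendsto
      (fun h : ℝ => h ^ (1 - κ 0) * specDensity n w κ A (h * lam))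
      (𝓝[>] (0 : ℝ))
      (𝓝 (A 0 / (2 * Real.Gamma (κ 0) * Real.cos (Real.pi * κ 0 / 2)) *
        |lam| ^ (κ 0 - 1))) := by
  obtain ⟨hκ0a, hκ0b⟩ := hκ 0 (Finset.mem_range.mpr (Nat.succ_pos n))
  have hlam' : 0 < |lam| := abs_pos.mpr hlam
  -- the rescaled argument tends to 0 within Ioi 0
  have harg : Tendsto (fun h : ℝ => h * |lam|) (𝓝[>] (0:ℝ)) (𝓝[>] (0:ℝ)) := by
    apply tendsto_nhdsWithin_of_tendsto_nhds_of_eventually_within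
    · have : Tendsto (fun h : ℝ => h * |lam|) (𝓝 (0:ℝ)) (𝓝 (0 * |lam|)) :=
        (continuous_id.mul continuous_const).tendsto 0
      rw [zero_mul] at this
      exact this.mono_left nhdsWithin_le_nhds
    · filter_upwards [self_mem_nhdsWithin] with h hh
      exact mul_pos hh hlam'
  have hcomp := (tendsto_rpow_mul_besselK hκ0a hκ0b).comp harg
  set c0 : ℝ := 2 * (2:ℝ) ^ ((1 - κ 0) / 2) /
    (Real.sqrt Real.pi * Real.Gamma (κ 0 / 2)) / 2 * A 0 with hc0def
  -- main term limit
  have hmain : Tendsto (fun h : ℝ => h ^ (1 - κ 0) *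
      (c0 * besselK ((κ 0 - 1) / 2) |h * lam| * |h * lam| ^ ((κ 0 - 1) / 2)))
      (𝓝[>] (0:ℝ))
      (𝓝 ((c0 * |lam| ^ (κ 0 - 1)) *
        (2 ^ ((1 - κ 0) / 2 - 1) * Real.Gamma ((1 - κ 0) / 2)))) := by
    refine Tendsto.congr' ?_ (hcomp.const_mul (c0 * |lam| ^ (κ 0 - 1)))
    filter_upwards [self_mem_nhdsWithin] with h hh
    have hh0 : (0:ℝ) < h := hh
    have habs : |h * lam| = h * |lam| := by rw [abs_mul, abs_of_pos hh0]
    simp only [Function.comp]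
    rw [habs, Real.mul_rpow hh0.le (abs_nonneg lam), Real.mul_rpow hh0.le (abs_nonneg lam)]
    have e1 : h ^ (1 - κ 0) * h ^ ((κ 0 - 1) / 2) = h ^ ((1 - κ 0) / 2) := by
      rw [← Real.rpow_add hh0]; congr 1; ring
    have e2 : |lam| ^ ((κ 0 - 1) / 2) =
        |lam| ^ (κ 0 - 1) * |lam| ^ ((1 - κ 0) / 2) := by
      rw [← Real.rpow_add hlam']; congr 1; ring
    rw [e2]
    linear_combination (-(c0 * besselK ((κ 0 - 1) / 2) (h * |lam|) *
      |lam| ^ (κ 0 - 1) * |lam| ^ ((1 - κ 0) / 2))) * e1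
  -- remainder limit
  have h0 : Tendsto (fun h : ℝ => h ^ (1 - κ 0)) (𝓝[>] (0:ℝ)) (𝓝 0) := by
    have hc := (Real.continuousAt_rpow_const 0 (1 - κ 0) (Or.inr (by linarith))).tendsto
    rw [Real.zero_rpow (by linarith : (1:ℝ) - κ 0 ≠ 0)] at hc
    exact hc.mono_left nhdsWithin_le_nhds
  have hrem : Tendsto (fun h : ℝ => h ^ (1 - κ 0) * ∑ j ∈ Finset.Icc 1 n,
      (2 : ℝ) ^ ((1 - κ j) / 2) / (Real.sqrt Real.pi * Real.Gamma (κ j / 2)) / 2 * A j *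
        (besselK ((κ j - 1) / 2) |h * lam + w j| * |h * lam + w j| ^ ((κ j - 1) / 2) +
          besselK ((κ j - 1) / 2) |h * lam - w j| * |h * lam - w j| ^ ((κ j - 1) / 2)))
      (𝓝[>] (0:ℝ)) (𝓝 0) := by
    simp_rw [Finset.mul_sum]
    suffices hsum : Tendsto (fun h : ℝ => ∑ j ∈ Finset.Icc 1 n, h ^ (1 - κ 0) *
        ((2 : ℝ) ^ ((1 - κ j) / 2) / (Real.sqrt Real.pi * Real.Gamma (κ j / 2)) / 2 * A j *
          (besselK ((κ j - 1) / 2) |h * lam + w j| * |h * lam + w j| ^ ((κ j - 1) / 2) +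
            besselK ((κ j - 1) / 2) |h * lam - w j| * |h * lam - w j| ^ ((κ j - 1) / 2))))
        (𝓝[>] (0:ℝ)) (𝓝 (∑ j ∈ Finset.Icc 1 n, (0:ℝ))) by
      simpa using hsum
    refine tendsto_finset_sum _ fun j hj => ?_
    obtain ⟨hj1, hjn⟩ := Finset.mem_Icc.mp hj
    obtain ⟨hkj1, hkj2⟩ := hκ j (Finset.mem_range.mpr (Nat.lt_succ_of_le hjn))
    have hwj : 0 < w j := hw j hj
    have hAj : 0 ≤ A j := hA j (Finset.mem_range.mpr (Nat.lt_succ_of_le hjn))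
    have hΓj : 0 < Real.Gamma (κ j / 2) := Real.Gamma_pos_of_pos (by linarith)
    have hcj0 : 0 ≤ (2 : ℝ) ^ ((1 - κ j) / 2) /
        (Real.sqrt Real.pi * Real.Gamma (κ j / 2)) / 2 * A j := by
      refine mul_nonneg (div_nonneg (div_nonneg (by positivity) ?_) (by norm_num)) hAj
      exact mul_nonneg (Real.sqrt_nonneg _) hΓj.le
    have hν1 : -1 < (κ j - 1) / 2 := by linarith
    have hν2 : (κ j - 1) / 2 ≤ 1 := by linarith
    have hKc : 0 ≤ besselK ((κ j - 1) / 2) (w j / 2) := besselK_nonneg _ _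
    have hPc : 0 ≤ (w j / 2) ^ ((κ j - 1) / 2) := Real.rpow_nonneg (by positivity) _
    have hbnd := h0.mul_const ((2 : ℝ) ^ ((1 - κ j) / 2) /
        (Real.sqrt Real.pi * Real.Gamma (κ j / 2)) / 2 * A j *
      (besselK ((κ j - 1) / 2) (w j / 2) * (w j / 2) ^ ((κ j - 1) / 2) +
       besselK ((κ j - 1) / 2) (w j / 2) * (w j / 2) ^ ((κ j - 1) / 2)))
    rw [zero_mul] at hbnd
    refine squeeze_zero' ?_ ?_ hbnd
    · filter_upwards [self_mem_nhdsWithin] with h hh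
      have hh0 : (0:ℝ) < h := hh
      refine mul_nonneg (Real.rpow_nonneg hh0.le _) (mul_nonneg hcj0 ?_)
      refine add_nonneg ?_ ?_ <;>
        exact mul_nonneg (besselK_nonneg _ _) (Real.rpow_nonneg (abs_nonneg _) _)
    · have hδ : 0 < w j / (2 * |lam|) := by positivity
      filter_upwards [Ioo_mem_nhdsGT_of_mem (Set.mem_Ico.mpr ⟨le_refl (0:ℝ), hδ⟩)] with h hh
      obtain ⟨hh0, hhδ⟩ := hh
      have hs : |h * lam| < w j / 2 := by
        rw [abs_mul, abs_of_pos hh0]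
        calc h * |lam| < w j / (2 * |lam|) * |lam| :=
              mul_lt_mul_of_pos_right hhδ hlam'
          _ = w j / 2 := by field_simp
      have hb1 : w j / 2 ≤ |h * lam + w j| := by
        have h1 := abs_sub_abs_le_abs_sub (w j) (-(h * lam))
        rw [abs_neg, sub_neg_eq_add, abs_of_pos hwj, add_comm] at h1
        linarith
      have hb2 : w j / 2 ≤ |h * lam - w j| := by
        rw [abs_sub_comm]
        have h1 := abs_sub_abs_le_abs_sub (w j) (h * lam)
        rw [abs_of_pos hwj] at h1
        linarith
      have hwj2 : (0:ℝ) < w j / 2 := by positivity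
      have hK1 := besselK_anti hν1 hν2 hwj2 hb1
      have hK2 := besselK_anti hν1 hν2 hwj2 hb2
      have hP1 : |h * lam + w j| ^ ((κ j - 1) / 2) ≤ (w j / 2) ^ ((κ j - 1) / 2) :=
        Real.rpow_le_rpow_of_nonpos hwj2 hb1 (by linarith)
      have hP2 : |h * lam - w j| ^ ((κ j - 1) / 2) ≤ (w j / 2) ^ ((κ j - 1) / 2) :=
        Real.rpow_le_rpow_of_nonpos hwj2 hb2 (by linarith)
      refine mul_le_mul_of_nonneg_left ?_ (Real.rpow_nonneg hh0.le _)
      refine mul_le_mul_of_nonneg_left ?_ hcj0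
      refine add_le_add ?_ ?_
      · exact mul_le_mul hK1 hP1 (Real.rpow_nonneg (abs_nonneg _) _) hKc
      · exact mul_le_mul hK2 hP2 (Real.rpow_nonneg (abs_nonneg _) _) hKc
  have hfinal := hmain.add hrem
  rw [add_zero] at hfinal
  have heq : (fun h : ℝ => h ^ (1 - κ 0) * specDensity n w κ A (h * lam))
      = fun h : ℝ => h ^ (1 - κ 0) *
          (c0 * besselK ((κ 0 - 1) / 2) |h * lam| * |h * lam| ^ ((κ 0 - 1) / 2)) +
        h ^ (1 - κ 0) * ∑ j ∈ Finset.Icc 1 n,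
          (2 : ℝ) ^ ((1 - κ j) / 2) / (Real.sqrt Real.pi * Real.Gamma (κ j / 2)) / 2 * A j *
            (besselK ((κ j - 1) / 2) |h * lam + w j| * |h * lam + w j| ^ ((κ j - 1) / 2) +
              besselK ((κ j - 1) / 2) |h * lam - w j| * |h * lam - w j| ^ ((κ j - 1) / 2)) := by
    funext h
    simp only [specDensity, hc0def]
    ring
  have hval : (c0 * |lam| ^ (κ 0 - 1)) *
      (2 ^ ((1 - κ 0) / 2 - 1) * Real.Gamma ((1 - κ 0) / 2))
      = A 0 / (2 * Real.Gamma (κ 0) * Real.cos (Real.pi * κ 0 / 2)) * |lam| ^ (κ 0 - 1) := by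
    have hgc := gamma_const_eq hκ0a hκ0b
    rw [hc0def]
    linear_combination (A 0 * |lam| ^ (κ 0 - 1)) * hgc
  rw [heq, ← hval]
  exact hfinal
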